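/- Let f : 2^ω → ℝ be a Baire 1 function with |f|_α = ν + 1 a successor ordinal. Then there exists a maximal pair for f, i.e., rationals p and ε with ε > 0 such that α(f,p,ε) = ν + 1 and f(P^ν_{f,p,ε}) is not contained in (p−ε, p+ε). -/

import Mathlib

/-!
Since `ν + 1` is a successor ordinal, the supremum defining `|f|_α` is attained at some `(p, ε)`,
so `P^ν_{f,p,ε}` contains some `A`. Any rational interval `(p' - ε', p' + ε') ⊆ (p - ε, p + ε)`
avoiding `f A` is then a maximal pair: shrinking the interval only enlarges every `P^μ`, so
`A ∈ P^ν_{f,p',ε'}` and `α(f,p',ε') ≥ ν + 1`, provided the derivation for `(p', ε')` reaches `∅`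
at all. That is where Baire 1 enters: the derivation stabilises at some closed set `P`, every
relatively open piece of which carries values `≥ p + ε` and `≤ p - ε`; but on the compact space `P`
a pointwise limit of continuous functions has oscillation `≤ ε` on some nonempty open set.
-/

/-- Cantor space `2^ω`. -/
abbrev Cantor : Type := ℕ → Bool

/-- A bit `b` is a correct answer to the question `f A ≲_ε p`. -/
def CorrectAnswer (f : Cantor → ℝ) (A : Cantor) (p ε : ℚ) (b : Bool) : Prop :=
  (b = true ∧ f A < (p : ℝ) + (ε : ℝ)) ∨ (b = false ∧ (p : ℝ) - (ε : ℝ) < f A)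

/-- Topological m-reducibility `f ≤_m g`. -/
def MReducible (f g : Cantor → ℝ) : Prop :=
  ∀ p ε : ℚ, 0 < ε → ∃ q δ : ℚ, 0 < δ ∧ ∃ k : Cantor → Cantor, Continuous k ∧
    ∀ A b, CorrectAnswer g (k A) q δ b → CorrectAnswer f A p ε b

/-- `f` is Baire class 1: a pointwise limit of continuous functions. -/
def BaireOne (f : Cantor → ℝ) : Prop :=
  ∃ F : ℕ → Cantor → ℝ, (∀ n, Continuous (F n)) ∧
    ∀ A, Filter.Tendsto (fun n => F n A) Filter.atTop (nhds (f A))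

/-- The Bourgain derivation sequence `P^ν_{f,p,ε}`. -/
noncomputable def derivSeq (f : Cantor → ℝ) (p ε : ℚ) (ν : Ordinal.{0}) : Set Cantor :=
  Ordinal.limitRecOn ν Set.univ
    (fun _ P => P \ ⋃₀ {U : Set Cantor | IsOpen U ∧
        (f '' (P ∩ U) ⊆ Set.Iio ((p : ℝ) + (ε : ℝ)) ∨
         f '' (P ∩ U) ⊆ Set.Ioi ((p : ℝ) - (ε : ℝ)))})
    (fun o _ ih => ⋂ (μ : {μ : Ordinal.{0} // μ < o}), ih μ.1 μ.2)

/-- `α(f,p,ε)`: the least ordinal `ν` with `P^ν_{f,p,ε} = ∅`. -/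
noncomputable def bAlpha (f : Cantor → ℝ) (p ε : ℚ) : Ordinal.{0} :=
  sInf {ν | derivSeq f p ε ν = ∅}

/-- The Bourgain rank `|f|_α`. -/
noncomputable def bourgainRank (f : Cantor → ℝ) : Ordinal.{0} :=
  ⨆ x : ℚ × {ε : ℚ // 0 < ε}, bAlpha f x.1 x.2.1

/-- `(p,ε)` is a maximal pair for `f` (with `|f|_α = ν + 1`):
`α(f,p,ε) = ν + 1` and `f(P^ν_{f,p,ε}) ⊄ (p-ε, p+ε)`. -/
def IsMaximalPair (f : Cantor → ℝ) (ν : Ordinal) (p ε : ℚ) : Prop :=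
  0 < ε ∧ bAlpha f p ε = ν + 1 ∧
    ¬ (f '' derivSeq f p ε ν ⊆ Set.Ioo ((p : ℝ) - (ε : ℝ)) ((p : ℝ) + (ε : ℝ)))

/-- `f` (with `|f|_α = ν + 1`) is two-sided. -/
def TwoSided (f : Cantor → ℝ) (ν : Ordinal) : Prop :=
  ∃ p ε : ℚ, IsMaximalPair f ν p ε ∧
    ¬ (f '' derivSeq f p ε ν ⊆ Set.Ioi ((p : ℝ) - (ε : ℝ))) ∧
    ¬ (f '' derivSeq f p ε ν ⊆ Set.Iio ((p : ℝ) + (ε : ℝ)))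

/-- `f` (with `|f|_α = ν + 1`) is one-sided. -/
def OneSided (f : Cantor → ℝ) (ν : Ordinal) : Prop := ¬ TwoSided f ν

/-- `f` (with `|f|_α = ν + 1`) is left-sided. -/
def LeftSided (f : Cantor → ℝ) (ν : Ordinal) : Prop :=
  ∀ p ε : ℚ, IsMaximalPair f ν p ε → f '' derivSeq f p ε ν ⊆ Set.Iio ((p : ℝ) + (ε : ℝ))

/-- `f` (with `|f|_α = ν + 1`) is right-sided. -/
def RightSided (f : Cantor → ℝ) (ν : Ordinal) : Prop :=
  ∀ p ε : ℚ, IsMaximalPair f ν p ε → f '' derivSeq f p ε ν ⊆ Set.Ioi ((p : ℝ) - (ε : ℝ))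

open Set Filter Topology

section BaireOne

variable {Y : Type*} [TopologicalSpace Y] [BaireSpace Y] [Nonempty Y]
  {g : Y → ℝ} {G : ℕ → Y → ℝ}

theorem exists_nonempty_interior_forall_dist_le_of_tendsto (hG : ∀ n, Continuous (G n))
    (hlim : ∀ y, Tendsto (fun n => G n y) atTop (𝓝 (g y))) {r : ℝ} (hr : 0 < r) :
    ∃ n, (interior {y | ∀ m, n ≤ m → dist (G m y) (G n y) ≤ r}).Nonempty := by
  refine nonempty_interior_of_iUnion_of_closed (fun n => ?_) (iUnion_eq_univ_iff.2 fun y => ?_)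
  · simp only [ofPred_forall]
    exact isClosed_iInter fun m => isClosed_iInter fun _ =>
      isClosed_le ((hG m).dist (hG n)) continuous_const
  · obtain ⟨N, hN⟩ := Metric.tendsto_atTop.1 (hlim y) (r / 2) (half_pos hr)
    refine ⟨N, fun m hm => ?_⟩
    linarith [dist_triangle_right (G m y) (G N y) (g y), hN m hm, hN N le_rfl]

theorem exists_isOpen_forall_dist_le_of_tendsto (hG : ∀ n, Continuous (G n))
    (hlim : ∀ y, Tendsto (fun n => G n y) atTop (𝓝 (g y))) {δ : ℝ} (hδ : 0 < δ) :
    ∃ U : Set Y, IsOpen U ∧ U.Nonempty ∧ ∀ x ∈ U, ∀ y ∈ U, dist (g x) (g y) ≤ δ := by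
  obtain ⟨n, x₀, hx₀⟩ :=
    exists_nonempty_interior_forall_dist_le_of_tendsto hG hlim (by positivity : 0 < δ / 4)
  set C := {y | ∀ m, n ≤ m → dist (G m y) (G n y) ≤ δ / 4}
  have hgG : ∀ y ∈ interior C, dist (g y) (G n y) ≤ δ / 4 := fun y hy =>
    le_of_tendsto ((hlim y).dist tendsto_const_nhds)
      (eventually_atTop.2 ⟨n, interior_subset (s := C) hy⟩)
  refine ⟨interior C ∩ G n ⁻¹' Metric.ball (G n x₀) (δ / 4),
    isOpen_interior.inter (Metric.isOpen_ball.preimage (hG n)),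
    ⟨x₀, hx₀, Metric.mem_ball_self (by positivity)⟩, fun x ⟨hxC, hx⟩ y ⟨hyC, hy⟩ => ?_⟩
  have hGxy : dist (G n x) (G n y) ≤ δ / 2 := by
    linarith [dist_triangle_right (G n x) (G n y) (G n x₀), Metric.mem_ball.1 hx,
      Metric.mem_ball.1 hy]
  calc dist (g x) (g y) ≤ dist (g x) (G n x) + dist (G n x) (G n y) + dist (G n y) (g y) :=
        dist_triangle4 _ _ _ _
    _ ≤ δ / 4 + δ / 2 + δ / 4 := by
        gcongr
        exacts [hgG x hxC, by rw [dist_comm]; exact hgG y hyC]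
    _ = δ := by ring

end BaireOne

section Derivation

def derivRemoved {X : Type*} [TopologicalSpace X] (f : X → ℝ) (p ε : ℚ) (P : Set X) : Set X :=
  ⋃₀ {U : Set X | IsOpen U ∧
    (f '' (P ∩ U) ⊆ Iio ((p : ℝ) + (ε : ℝ)) ∨ f '' (P ∩ U) ⊆ Ioi ((p : ℝ) - (ε : ℝ)))}

theorem exists_mem_of_notMem_derivRemoved {X : Type*} [TopologicalSpace X] {f : X → ℝ}
    {p ε : ℚ} {P U : Set X} {x : X} (hx : x ∉ derivRemoved f p ε P) (hU : IsOpen U)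
    (hxU : x ∈ U) :
    (∃ a ∈ P ∩ U, (p : ℝ) + ε ≤ f a) ∧ ∃ b ∈ P ∩ U, f b ≤ (p : ℝ) - ε := by
  have hU' : ¬ (f '' (P ∩ U) ⊆ Iio ((p : ℝ) + ε) ∨ f '' (P ∩ U) ⊆ Ioi ((p : ℝ) - ε)) :=
    fun h => hx ⟨U, ⟨hU, h⟩, hxU⟩
  simpa only [not_or, image_subset_iff, not_subset, mem_preimage, mem_Iio, mem_Ioi, not_lt]
    using hU'

variable (f : Cantor → ℝ) (p ε : ℚ)

theorem derivSeq_zero : derivSeq f p ε 0 = univ := by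
  simp [derivSeq]

theorem derivSeq_add_one (o : Ordinal.{0}) :
    derivSeq f p ε (o + 1) = derivSeq f p ε o \ derivRemoved f p ε (derivSeq f p ε o) := by
  rw [derivSeq, Ordinal.limitRecOn_add_one]
  rfl

theorem derivSeq_limit {o : Ordinal.{0}} (ho : Order.IsSuccLimit o) :
    derivSeq f p ε o = ⋂ μ : {μ : Ordinal.{0} // μ < o}, derivSeq f p ε μ := by
  rw [derivSeq, Ordinal.limitRecOn_limit _ _ _ _ ho]
  rfl

theorem isClosed_derivSeq (o : Ordinal.{0}) : IsClosed (derivSeq f p ε o) := by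
  induction o using Ordinal.limitRecOn with
  | zero => simp [derivSeq_zero]
  | add_one o ih =>
    rw [derivSeq_add_one]
    exact ih.sdiff (isOpen_sUnion fun U hU => hU.1)
  | limit o ho ih =>
    rw [derivSeq_limit f p ε ho]
    exact isClosed_iInter fun μ => ih μ.1 μ.2

theorem derivSeq_antitone : Antitone (derivSeq f p ε) := by
  intro o' o hle
  induction o using Ordinal.limitRecOn with
  | zero => rw [nonpos_iff_eq_zero.1 hle]
  | add_one o ih =>
    rcases hle.eq_or_lt with rfl | hlt
    · exact subset_rfl
    rw [derivSeq_add_one]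
    exact sdiff_subset.trans (ih (Order.lt_add_one_iff.1 hlt))
  | limit o ho ih =>
    rcases hle.eq_or_lt with rfl | hlt
    · exact subset_rfl
    rw [derivSeq_limit f p ε ho]
    exact iInter_subset_of_subset ⟨o', hlt⟩ subset_rfl

theorem exists_derivSeq_add_one_eq : ∃ o, derivSeq f p ε (o + 1) = derivSeq f p ε o := by
  by_contra! hne
  refine not_injective_of_ordinal (derivSeq f p ε) fun a b hab => ?_
  by_contra hab'
  wlog hlt : a < b generalizing a b
  · exact this b a hab.symm (Ne.symm hab') ((Ne.symm hab').lt_of_le (not_lt.1 hlt))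
  refine hne a (subset_antisymm (derivSeq_antitone f p ε le_self_add) ?_)
  exact hab ▸ derivSeq_antitone f p ε (Order.add_one_le_iff.2 hlt)

variable {f p ε}

theorem derivSeq_subset_of_le {p' ε' : ℚ} (hup : (p' : ℝ) + ε' ≤ (p : ℝ) + ε)
    (hlow : (p : ℝ) - ε ≤ (p' : ℝ) - ε') (o : Ordinal.{0}) :
    derivSeq f p ε o ⊆ derivSeq f p' ε' o := by
  induction o using Ordinal.limitRecOn with
  | zero => simp [derivSeq_zero]
  | add_one o ih =>
    rw [derivSeq_add_one, derivSeq_add_one]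
    refine sdiff_subset_sdiff ih (sUnion_subset fun U ⟨hU, hsmall⟩ => ?_)
    refine subset_sUnion_of_mem ⟨hU, hsmall.imp (fun h => ?_) fun h => ?_⟩
    · exact (image_mono (inter_subset_inter_left U ih)).trans (h.trans (Iio_subset_Iio hup))
    · exact (image_mono (inter_subset_inter_left U ih)).trans (h.trans (Ioi_subset_Ioi hlow))
  | limit o ho ih =>
    rw [derivSeq_limit f p ε ho, derivSeq_limit f p' ε' ho]
    exact iInter_mono fun μ => ih μ.1 μ.2

theorem exists_derivSeq_eq_empty (hf : BaireOne f) (hε : 0 < ε) :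
    ∃ o, derivSeq f p ε o = ∅ := by
  obtain ⟨o, ho⟩ := exists_derivSeq_add_one_eq f p ε
  refine ⟨o, not_nonempty_iff_eq_empty.1 fun hne => ?_⟩
  set P := derivSeq f p ε o
  have hstable : ∀ x ∈ P, x ∉ derivRemoved f p ε P := fun x hx => by
    rw [← ho, derivSeq_add_one] at hx
    exact hx.2
  obtain ⟨F, hFc, hFlim⟩ := hf
  have : CompactSpace P := isCompact_iff_compactSpace.1 (isClosed_derivSeq f p ε o).isCompact
  have : Nonempty P := hne.to_subtype
  obtain ⟨W, hWo, ⟨⟨x, hxP⟩, hxW⟩, hosc⟩ := exists_isOpen_forall_dist_le_of_tendsto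
    (Y := P) (g := f ∘ Subtype.val) (fun n => (hFc n).comp continuous_subtype_val)
    (fun y => hFlim y.1) (δ := ε) (by exact_mod_cast hε)
  obtain ⟨U, hU, rfl⟩ := isOpen_induced_iff.1 hWo
  obtain ⟨⟨a, haPU, ha⟩, b, hbPU, hb⟩ :=
    exists_mem_of_notMem_derivRemoved (hstable x hxP) hU hxW
  have hab := hosc ⟨a, haPU.1⟩ haPU.2 ⟨b, hbPU.1⟩ hbPU.2
  rw [Function.comp_apply, Function.comp_apply, Real.dist_eq, abs_le] at hab
  have : (0 : ℝ) < ε := by exact_mod_cast hε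
  linarith [hab.2]

end Derivation

section Rank

variable {f : Cantor → ℝ} {p ε : ℚ}

theorem derivSeq_nonempty_of_lt_bAlpha {μ : Ordinal.{0}} (h : μ < bAlpha f p ε) :
    (derivSeq f p ε μ).Nonempty :=
  nonempty_iff_ne_empty.2 fun he => (show bAlpha f p ε ≤ μ from csInf_le' he).not_gt h

theorem bAlpha_le_bAlpha_of_le (hf : BaireOne f) {p' ε' : ℚ} (hε' : 0 < ε')
    (hup : (p' : ℝ) + ε' ≤ (p : ℝ) + ε) (hlow : (p : ℝ) - ε ≤ (p' : ℝ) - ε') :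
    bAlpha f p ε ≤ bAlpha f p' ε' :=
  le_csInf (exists_derivSeq_eq_empty hf hε') fun μ hμ =>
    csInf_le' (subset_empty_iff.1 (hμ ▸ derivSeq_subset_of_le hup hlow μ))

theorem bAlpha_le_bourgainRank (hε : 0 < ε) : bAlpha f p ε ≤ bourgainRank f := by
  have hbdd : BddAbove (range fun x : ℚ × {ε : ℚ // 0 < ε} => bAlpha f x.1 x.2.1) :=
    Ordinal.bddAbove_of_small
  exact le_ciSup hbdd (p, ⟨ε, hε⟩)

theorem exists_bAlpha_eq_of_bourgainRank_eq_add_one {ν : Ordinal.{0}}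
    (h : bourgainRank f = ν + 1) : ∃ p ε : ℚ, 0 < ε ∧ bAlpha f p ε = ν + 1 := by
  have : Nonempty (ℚ × {ε : ℚ // 0 < ε}) := ⟨(0, ⟨1, one_pos⟩)⟩
  have hsucc : ¬ Order.IsSuccLimit (bourgainRank f) := by
    rw [h, ← Order.succ_eq_add_one]
    exact Order.not_isSuccLimit_succ ν
  obtain ⟨⟨p, ε, hε⟩, hp⟩ := exists_eq_ciSup_of_not_isSuccLimit Ordinal.bddAbove_of_small hsucc
  exact ⟨p, ε, hε, hp.trans h⟩

end Rank

theorem exists_rat_Ioo_subset_notMem (p : ℚ) {ε : ℚ} (hε : 0 < ε) (t : ℝ) :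
    ∃ p' ε' : ℚ, 0 < ε' ∧ (p' : ℝ) + ε' ≤ (p : ℝ) + ε ∧ (p : ℝ) - ε ≤ (p' : ℝ) - ε' ∧
      t ∉ Ioo ((p' : ℝ) - ε') ((p' : ℝ) + ε') := by
  have : (0 : ℝ) < ε := by exact_mod_cast hε
  rcases le_or_gt (p : ℝ) t with ht | ht
  · refine ⟨p - ε / 2, ε / 4, by positivity, ?_⟩
    push_cast
    exact ⟨by linarith, by linarith, fun hmem => by linarith [hmem.2]⟩
  · refine ⟨p + ε / 2, ε / 4, by positivity, ?_⟩
    push_cast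
    exact ⟨by linarith, by linarith, fun hmem => by linarith [hmem.1]⟩

/-- If `f` is Baire 1 with `|f|_α = ν + 1` a successor ordinal, then a maximal pair for
`f` exists. -/
theorem exists_maximal_pair (f : Cantor → ℝ) (hf : BaireOne f) (ν : Ordinal)
    (h : bourgainRank f = ν + 1) : ∃ p ε : ℚ, IsMaximalPair f ν p ε := by
  obtain ⟨p, ε, hε, hα⟩ := exists_bAlpha_eq_of_bourgainRank_eq_add_one h
  obtain ⟨A, hA⟩ := derivSeq_nonempty_of_lt_bAlpha (hα ▸ Order.lt_add_one_iff.2 le_rfl)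
  obtain ⟨p', ε', hε', hup, hlow, hA'⟩ := exists_rat_Ioo_subset_notMem p hε (f A)
  refine ⟨p', ε', hε', le_antisymm ?_ ?_, fun hsub => ?_⟩
  · exact h ▸ bAlpha_le_bourgainRank hε'
  · exact hα ▸ bAlpha_le_bAlpha_of_le hf hε' hup hlow
  · exact hA' (hsub ⟨A, derivSeq_subset_of_le hup hlow ν hA, rfl⟩)
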